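/- arXiv:0906.5010 — 3 statements merged into one kernel-verified Lean document; each statement's English description precedes it below -/
import Mathlib

section
/- Assume s is special for S with parameter α. Then for every edge (u,v) of G_S, the directed edges ⟨u,v⟩ and ⟨v,u⟩ are not both dominant. -/
open MeasureTheory SimpleGraph

namespace CF

variable {V : Type} [Fintype V] [DecidableEq V]

/-- The subgraph of `G` induced on the vertex set `S` (kept as a graph on `V`). -/
def inducedSub (G : SimpleGraph V) (S : Set V) : SimpleGraph V where
  Adj u v := u ∈ S ∧ v ∈ S ∧ G.Adj u v
  symm := ⟨fun u v h => ⟨h.2.1, h.1, h.2.2.symm⟩⟩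
  loopless := ⟨fun v h => G.loopless.irrefl v h.2.2⟩

/-- The space of walks in `G` starting at `s` of length at most `ℓ`
(a lazy walk of length `ℓ` induces such a walk after deleting self-loops). -/
def WalkSpace (G : SimpleGraph V) (s : V) (ℓ : ℕ) : Type :=
  Σ t : V, {w : G.Walk s t // w.length ≤ ℓ}

instance (G : SimpleGraph V) (s : V) (ℓ : ℕ) : MeasurableSpace (WalkSpace G s ℓ) := ⊤

variable {G : SimpleGraph V} {s : V} {ℓ : ℕ}

/-- The walk `W` reaches the vertex `v`. -/
def Reaches (W : WalkSpace G s ℓ) (v : V) : Prop := v ∈ W.2.1.support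

/-- The simple path from `s` to `v` induced by a walk `W` reaching `v`:
truncate `W` at its first visit to `v` and delete retraced segments. -/
def inducedPath (W : WalkSpace G s ℓ) (v : V) (h : Reaches W v) : G.Walk s v :=
  (W.2.1.takeUntil v h).bypass

/-- `s` is special for `S` with parameter `α`: every vertex of `S` is reached
by a `μ`-random walk with probability at least `α`. -/
def Special (μ : Measure (WalkSpace G s ℓ)) (S : Finset V) (α : ℝ) : Prop :=
  ∀ v ∈ S, α ≤ (μ {W | Reaches W v}).toReal

/-- `P` is a dominant path to `v`: `P` is a simple path from `s` to `v`, more than half of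
the probability mass of walks reaching `v` induce `P` at `v`, and the probability of
reaching `v` inducing a path different from `P` is less than `α/2`. -/
def IsDominantPath (μ : Measure (WalkSpace G s ℓ)) (α : ℝ) (v : V) (P : G.Walk s v) : Prop :=
  P.IsPath ∧
    (μ {W | Reaches W v}).toReal / 2 <
      (μ {W | ∃ h : Reaches W v, inducedPath W v h = P}).toReal ∧
    (μ {W | ∃ h : Reaches W v, inducedPath W v h ≠ P}).toReal < α / 2

/-- `v` is isolated: it has a dominant path. -/
def Isolated (μ : Measure (WalkSpace G s ℓ)) (α : ℝ) (v : V) : Prop :=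
  ∃ P : G.Walk s v, IsDominantPath μ α v P

/-- The directed edge `⟨u,v⟩` of `G_S` is dominant. -/
def Dominant (μ : Measure (WalkSpace G s ℓ)) (S : Finset V) (α : ℝ) (u v : V) : Prop :=
  u ∈ S ∧ v ∈ S ∧ G.Adj u v ∧ Isolated μ α v ∧
    (μ {W | ∃ h : Reaches W v, s(u, v) ∉ (inducedPath W v h).edges}).toReal < α / 2

/-- The undirected edge `(u,v)` of `G_S` is recessive. -/
def Recessive (μ : Measure (WalkSpace G s ℓ)) (S : Finset V) (α : ℝ) (u v : V) : Prop :=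
  u ∈ S ∧ v ∈ S ∧ G.Adj u v ∧ ¬ Dominant μ S α u v ∧ ¬ Dominant μ S α v u

/-- Two walks form a cycle if the subgraph of `G` induced on the union of their
vertex sets contains a cycle. -/
def FormsCycle (W W' : WalkSpace G s ℓ) : Prop :=
  ¬ (inducedSub G ({v | Reaches W v} ∪ {v | Reaches W' v})).IsAcyclic

/-- `cyc_W`: the probability that an independent `μ`-random walk forms a cycle with `W`. -/
noncomputable def cycProb (μ : Measure (WalkSpace G s ℓ)) (W : WalkSpace G s ℓ) : ℝ :=
  (μ {W' | FormsCycle W W'}).toReal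

/-- `W` is heavy if `cyc_W > 1/√n`. -/
def Heavy (μ : Measure (WalkSpace G s ℓ)) (W : WalkSpace G s ℓ) : Prop :=
  1 / Real.sqrt (Fintype.card V) < cycProb μ W

/-- `W` is light if it is not heavy. -/
def Light (μ : Measure (WalkSpace G s ℓ)) (W : WalkSpace G s ℓ) : Prop := ¬ Heavy μ W

/-- `q^H_v`: the probability that a `μ`-random walk is heavy and reaches `v`. -/
noncomputable def qH (μ : Measure (WalkSpace G s ℓ)) (v : V) : ℝ :=
  (μ {W | Heavy μ W ∧ Reaches W v}).toReal

/-- `v` is blue if `q^H_v > α/4`. -/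
def Blue (μ : Measure (WalkSpace G s ℓ)) (α : ℝ) (v : V) : Prop := α / 4 < qH μ v

/-- The event `E_w` on a pair of independent walks: both walks are light and either
(i) both reach `w` and induce distinct paths at `w`, or (ii) one reaches `w`, the other
reaches a `G_S`-neighbor `u` of `w`, and the edge sets of the two induced paths together
with the edge `(u,w)` contain a cycle. -/
def EventE (μ : Measure (WalkSpace G s ℓ)) (S : Finset V) (w : V)
    (p : WalkSpace G s ℓ × WalkSpace G s ℓ) : Prop :=
  Light μ p.1 ∧ Light μ p.2 ∧
    ((∃ (h1 : Reaches p.1 w) (h2 : Reaches p.2 w),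
        inducedPath p.1 w h1 ≠ inducedPath p.2 w h2) ∨
      (∃ u, u ∈ S ∧ w ∈ S ∧ G.Adj u w ∧
        ((∃ (h1 : Reaches p.1 w) (h2 : Reaches p.2 u),
            ¬ (SimpleGraph.fromEdgeSet
                ({e | e ∈ (inducedPath p.1 w h1).edges} ∪
                  {e | e ∈ (inducedPath p.2 u h2).edges} ∪ {s(u, w)})).IsAcyclic) ∨
          (∃ (h1 : Reaches p.2 w) (h2 : Reaches p.1 u),
            ¬ (SimpleGraph.fromEdgeSet
                ({e | e ∈ (inducedPath p.2 w h1).edges} ∪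
                  {e | e ∈ (inducedPath p.1 u h2).edges} ∪ {s(u, w)})).IsAcyclic))))

end CF

/-!
If `⟨u,v⟩` is dominant, the dominant path `P` to `v` must use the edge `(u,v)`, since the walks
inducing `P` at `v` already carry probability more than `q_v / 2 ≥ α / 2`. Each such walk visits
`u` strictly before its first visit to `v`, so the path it induces at `u` avoids `v`, and with it
the edge `(v,u)`. These walks therefore witness that `⟨v,u⟩` is not dominant.
-/

namespace CF

variable {V : Type} [DecidableEq V] {G : SimpleGraph V} {s : V} {ℓ : ℕ}

lemma reaches_of_mem_support_inducedPath {W : WalkSpace G s ℓ} {u v : V} (hv : Reaches W v)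
    (hu : u ∈ (inducedPath W v hv).support) : Reaches W u :=
  W.2.1.support_takeUntil_subset_support hv (Walk.support_bypass_subset_support _ hu)

lemma notMem_support_inducedPath_of_mem_support_inducedPath {W : WalkSpace G s ℓ} {u v : V}
    (huv : u ≠ v) (hv : Reaches W v) (hu : u ∈ (inducedPath W v hv).support) :
    v ∉ (inducedPath W u (reaches_of_mem_support_inducedPath hv hu)).support := fun hvu =>
  W.2.1.notMem_support_takeUntil_support_takeUntil_subset huv hv
    (Walk.support_bypass_subset_support _ hu) (Walk.support_bypass_subset_support _ hvu)

lemma IsDominantPath.half_lt_measure_of_subset {μ : Measure (WalkSpace G s ℓ)} [IsFiniteMeasure μ]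
    {α : ℝ} {v : V} {P : G.Walk s v} (hP : IsDominantPath μ α v P)
    (hαv : α ≤ (μ {W | Reaches W v}).toReal) {B : Set (WalkSpace G s ℓ)}
    (hB : {W | ∃ h : Reaches W v, inducedPath W v h = P} ⊆ B) :
    α / 2 < (μ B).toReal :=
  calc α / 2 ≤ (μ {W | Reaches W v}).toReal / 2 := by linarith
    _ < (μ {W | ∃ h : Reaches W v, inducedPath W v h = P}).toReal := hP.2.1
    _ ≤ (μ B).toReal := ENNReal.toReal_mono (measure_ne_top μ B) (measure_mono hB)

lemma IsDominantPath.mem_edges {μ : Measure (WalkSpace G s ℓ)} [IsFiniteMeasure μ] {α : ℝ}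
    {u v : V} {P : G.Walk s v} (hP : IsDominantPath μ α v P)
    (hαv : α ≤ (μ {W | Reaches W v}).toReal)
    (hedge : (μ {W | ∃ h : Reaches W v, s(u, v) ∉ (inducedPath W v h).edges}).toReal < α / 2) :
    s(u, v) ∈ P.edges := by
  by_contra hnot
  refine hedge.not_gt (hP.half_lt_measure_of_subset hαv ?_)
  rintro W ⟨h, hWP⟩
  exact ⟨h, hWP ▸ hnot⟩

lemma setOf_inducedPath_eq_subset_of_mem_edges {u v : V} (huv : u ≠ v) {P : G.Walk s v}
    (hP : s(u, v) ∈ P.edges) :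
    {W : WalkSpace G s ℓ | ∃ h : Reaches W v, inducedPath W v h = P} ⊆
      {W | ∃ h : Reaches W u, s(v, u) ∉ (inducedPath W u h).edges} := by
  rintro W ⟨hv, rfl⟩
  have hu := (inducedPath W v hv).fst_mem_support_of_mem_edges hP
  exact ⟨reaches_of_mem_support_inducedPath hv hu, fun hvu =>
    notMem_support_inducedPath_of_mem_support_inducedPath huv hv hu
      (Walk.fst_mem_support_of_mem_edges _ hvu)⟩

end CF

theorem stmt1_general {V : Type} [DecidableEq V]
    (G : SimpleGraph V)
    (S : Finset V) (s : V) (ℓ : ℕ)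
    (μ : MeasureTheory.Measure (CF.WalkSpace G s ℓ)) [MeasureTheory.IsProbabilityMeasure μ]
    (α : ℝ) (hspec : CF.Special μ S α)
    (u v : V) (hv : v ∈ S) (huv : G.Adj u v) :
    ¬ (CF.Dominant μ S α u v ∧ CF.Dominant μ S α v u) := by
  rintro ⟨⟨-, -, -, ⟨P, hP⟩, huv_edge⟩, ⟨-, -, -, -, hvu_edge⟩⟩
  have hαv := hspec v hv
  exact hvu_edge.not_gt <| hP.half_lt_measure_of_subset hαv <|
    CF.setOf_inducedPath_eq_subset_of_mem_edges huv.ne (hP.mem_edges hαv huv_edge)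

/-- For every edge `(u,v)` of `G_S`, the directed edges `⟨u,v⟩` and `⟨v,u⟩`
are not both dominant. -/
theorem stmt1 {V : Type} [Fintype V] [DecidableEq V]
    (G : SimpleGraph V) [DecidableRel G.Adj] (d : ℕ) (hd : 1 ≤ d)
    (hdeg : ∀ v, G.degree v ≤ d)
    (S : Finset V) (s : V) (hs : s ∈ S) (ℓ : ℕ)
    (μ : MeasureTheory.Measure (CF.WalkSpace G s ℓ)) [MeasureTheory.IsProbabilityMeasure μ]
    (α : ℝ) (hα : 0 < α) (hspec : CF.Special μ S α)
    (u v : V) (hu : u ∈ S) (hv : v ∈ S) (huv : G.Adj u v) :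
    ¬ (CF.Dominant μ S α u v ∧ CF.Dominant μ S α v u) :=
  stmt1_general G S s ℓ μ α hspec u v hv huv
end

section
/- Assume s is special for S with parameter α, and assume the induced subgraph G_S is ε-far from cycle-free, i.e., every set of edges of G_S whose removal makes G_S a forest has more than ε·|S|·d elements. Then G_S has more than ε·|S|·d recessive edges. -/
open MeasureTheory SimpleGraph

/-! Removing the recessive edges leaves only edges that are dominant in some direction. A dominant
edge `⟨u,v⟩` lies on every dominant path `P_v` of `v`: the walks inducing `P_v` carry mass more
than `α/2`, while those avoiding the edge carry less. Hence `u` is the penultimate vertex of `P_v`,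
so every vertex has at most one dominant in-edge. The same mass count yields a walk inducing both
`P_u` at `u` and `P_v` at `v`; then `P_u` is the prefix of `P_v` up to `u`, so the length of the
dominant path strictly increases along dominant edges. An orientation with in-degrees at most one
and such a potential closes no cycle, so deleting the recessive edges makes `G_S` a forest, and
`ε`-farness bounds their number. -/

namespace SimpleGraph.Walk

variable {V : Type*} [DecidableEq V] {G : SimpleGraph V} {a u x y : V}

lemma dropUntil_cons_of_ne {z : V} (h : G.Adj x z) {p : G.Walk z y} (hu : u ∈ p.support)
    (hxu : x ≠ u) : (p.cons h).dropUntil u (List.mem_of_mem_tail hu) = p.dropUntil u hu := by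
  simp [dropUntil, hxu]

lemma IsPath.dropUntil_takeUntil_comm {P : G.Walk x y} (hP : P.IsPath) (ha : a ∈ P.support)
    (hu : u ∈ (P.dropUntil a ha).support) (hua : u ≠ a) :
    ∃ h : a ∈ (P.takeUntil u (P.support_dropUntil_subset_support ha hu)).support,
      (P.dropUntil a ha).takeUntil u hu = (P.takeUntil u _).dropUntil a h := by
  induction P with
  | nil =>
    obtain rfl := List.mem_singleton.mp ha
    simp_all
  | @cons x z y hxz p ih =>
    by_cases hxa : x = a
    · subst hxa
      simp
    have ha' : a ∈ p.support := by simpa [Ne.symm hxa] using ha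
    rw [cons_isPath_iff] at hP
    simp only [dropUntil_cons_of_ne hxz ha' hxa] at hu ⊢
    have hxu : x ≠ u := by
      rintro rfl
      exact hP.2 (p.support_dropUntil_subset_support ha' hu)
    obtain ⟨h, heq⟩ := ih hP.1 ha' hu
    simp only [takeUntil_cons (p.support_dropUntil_subset_support ha' hu) hxu hxz]
    exact ⟨List.mem_cons_of_mem _ h, by rw [dropUntil_cons_of_ne hxz h hxa, heq]⟩

theorem bypass_takeUntil {p : G.Walk x y} (hu : u ∈ p.bypass.support) :
    p.bypass.takeUntil u hu = (p.takeUntil u (p.support_bypass_subset_support hu)).bypass := by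
  induction p with
  | nil =>
    obtain rfl := List.mem_singleton.mp hu
    rfl
  | @cons x z y hxz p ih =>
    by_cases hxu : x = u
    · subst hxu
      simp [bypass]
    by_cases hs : x ∈ p.bypass.support
    · have hb : (cons hxz p).bypass = p.bypass.dropUntil x hs := by simp [bypass, hs]
      have hu' : u ∈ (p.bypass.dropUntil x hs).support := hb ▸ hu
      have hup := p.bypass.support_dropUntil_subset_support hs hu'
      obtain ⟨hx, hcomm⟩ := p.bypass_isPath.dropUntil_takeUntil_comm hs hu' (Ne.symm hxu)
      simp only [ih hup] at hx hcomm
      simp only [hb, hcomm, takeUntil_cons (p.support_bypass_subset_support hup) hxu hxz]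
      simp [bypass, hx]
    · have hb : (cons hxz p).bypass = cons hxz p.bypass := by simp [bypass, hs]
      have hup : u ∈ p.bypass.support := by simpa [hb, Ne.symm hxu] using hu
      have hx : x ∉ (p.takeUntil u (p.support_bypass_subset_support hup)).bypass.support := by
        rw [← ih hup]
        exact fun h => hs (p.bypass.support_takeUntil_subset_support hup h)
      simp only [hb, takeUntil_cons hup hxu hxz, ih hup,
        takeUntil_cons (p.support_bypass_subset_support hup) hxu hxz]
      simp [bypass, hx]

end SimpleGraph.Walk

namespace SimpleGraph

variable {V : Type*} {H : SimpleGraph V}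

theorem isAcyclic_of_orientation (D : V → V → Prop) (r : V → ℕ)
    (horient : ∀ ⦃a b⦄, H.Adj a b → D a b ∨ D b a)
    (hin : ∀ ⦃a b c⦄, D a c → D b c → a = b)
    (hrank : ∀ ⦃a b c⦄, D a b → D b c → r b < r c) : H.IsAcyclic := by
  classical
  -- A vertex of the cycle with an in-edge and maximal `r` has no out-edge along the cycle, so
  -- both of its cycle neighbours point into it.
  intro x c hc
  set T := c.support.toFinset.filter fun b => ∃ a, D a b
  have hT : T.Nonempty := by
    rcases horient (c.adj_snd hc.not_nil) with h | h
    · exact ⟨c.snd,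
        Finset.mem_filter.mpr ⟨List.mem_toFinset.mpr (c.getVert_mem_support 1), x, h⟩⟩
    · exact ⟨x, Finset.mem_filter.mpr ⟨List.mem_toFinset.mpr c.start_mem_support, c.snd, h⟩⟩
  obtain ⟨b, hbT, hmax⟩ := T.exists_max_image r hT
  simp only [T, Finset.mem_filter, List.mem_toFinset] at hbT hmax
  obtain ⟨hb, a, hab⟩ := hbT
  set c' := c.rotate b hb
  have hc' : c'.IsCycle := hc.rotate hb
  have hmem : ∀ n, c'.getVert n ∈ c.support := fun n =>
    (c.mem_support_rotate_iff b hb).mp (c'.getVert_mem_support n)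
  have not_out : ∀ y ∈ c.support, ¬ D b y := fun y hy hby =>
    (hrank hab hby).not_ge (hmax y ⟨hy, b, hby⟩)
  rcases horient (c'.adj_snd hc'.not_nil) with h1 | h1
  · exact not_out _ (hmem 1) h1
  rcases horient (c'.adj_penultimate hc'.not_nil) with h2 | h2
  · exact hc'.snd_ne_penultimate (hin h1 h2)
  · exact not_out _ (hmem _) h2

end SimpleGraph

namespace CF

variable {V : Type} [DecidableEq V] {G : SimpleGraph V} {s : V} {ℓ : ℕ}
  {μ : Measure (WalkSpace G s ℓ)} {S : Finset V} {α : ℝ} {u v : V}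

lemma Reaches.of_mem_inducedPath {W : WalkSpace G s ℓ} {hv : Reaches W v}
    (hu : u ∈ (inducedPath W v hv).support) : Reaches W u :=
  W.2.1.support_takeUntil_subset_support hv
    ((W.2.1.takeUntil v hv).support_bypass_subset_support hu)

lemma inducedPath_eq_takeUntil {W : WalkSpace G s ℓ} (hv : Reaches W v)
    (hu : u ∈ (inducedPath W v hv).support) :
    inducedPath W u (Reaches.of_mem_inducedPath hu) = (inducedPath W v hv).takeUntil u hu := by
  simp only [inducedPath, Walk.bypass_takeUntil]
  exact congrArg Walk.bypass (Walk.takeUntil_takeUntil _ _ _).symm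

lemma IsDominantPath.half_lt {P : G.Walk s v} (hP : IsDominantPath μ α v P)
    (hv : α ≤ (μ {W | Reaches W v}).toReal) :
    α / 2 < (μ {W | ∃ h : Reaches W v, inducedPath W v h = P}).toReal := by
  linarith [hP.2.1]

variable [IsFiniteMeasure μ]

lemma exists_inducedPath_eq_of_isDominantPath {Pu : G.Walk s u} {Pv : G.Walk s v}
    (hPu : IsDominantPath μ α u Pu) (hPv : IsDominantPath μ α v Pv)
    (hv : α ≤ (μ {W | Reaches W v}).toReal) (hu : u ∈ Pv.support) :
    ∃ (W : WalkSpace G s ℓ) (hWu : Reaches W u) (hWv : Reaches W v),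
      inducedPath W u hWu = Pu ∧ inducedPath W v hWv = Pv := by
  have hsub : ¬ {W : WalkSpace G s ℓ | ∃ h : Reaches W v, inducedPath W v h = Pv} ⊆
      {W | ∃ h : Reaches W u, inducedPath W u h ≠ Pu} := fun h =>
    (ENNReal.toReal_mono (measure_ne_top μ _) (measure_mono h)).not_gt
      (by linarith [hPv.half_lt hv, hPu.2.2])
  obtain ⟨W, ⟨hWv, rfl⟩, hW⟩ := Set.not_subset.mp hsub
  have hWu : Reaches W u := Reaches.of_mem_inducedPath hu
  exact ⟨W, hWu, hWv, not_not.mp fun h => hW ⟨hWu, h⟩, rfl⟩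

variable (hspec : Special μ S α)
include hspec

lemma Dominant.mem_edges {P : G.Walk s v} (huv : Dominant μ S α u v)
    (hP : IsDominantPath μ α v P) : s(u, v) ∈ P.edges := by
  by_contra hne
  have hsub : {W : WalkSpace G s ℓ | ∃ h : Reaches W v, inducedPath W v h = P} ⊆
      {W | ∃ h : Reaches W v, s(u, v) ∉ (inducedPath W v h).edges} := by
    rintro W ⟨h, rfl⟩
    exact ⟨h, hne⟩
  linarith [hP.half_lt (hspec v huv.2.1), huv.2.2.2.2,
    ENNReal.toReal_mono (measure_ne_top μ _) (measure_mono hsub)]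

lemma Dominant.eq_penultimate {P : G.Walk s v} (huv : Dominant μ S α u v)
    (hP : IsDominantPath μ α v P) : u = P.penultimate :=
  hP.1.eq_penultimate_of_mem_edges (Sym2.eq_swap ▸ huv.mem_edges hspec hP)

lemma Dominant.left_unique {w : V} (huv : Dominant μ S α u v) (hwv : Dominant μ S α w v) :
    u = w := by
  obtain ⟨P, hP⟩ := huv.2.2.2.1
  rw [huv.eq_penultimate hspec hP, hwv.eq_penultimate hspec hP]

lemma Dominant.length_lt {Pu : G.Walk s u} {Pv : G.Walk s v} (huv : Dominant μ S α u v)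
    (hPu : IsDominantPath μ α u Pu) (hPv : IsDominantPath μ α v Pv) :
    Pu.length < Pv.length := by
  have hu := Pv.fst_mem_support_of_mem_edges (huv.mem_edges hspec hPv)
  obtain ⟨W, hWu, hWv, rfl, rfl⟩ :=
    exists_inducedPath_eq_of_isDominantPath hPu hPv (hspec v huv.2.1) hu
  rw [inducedPath_eq_takeUntil hWv hu]
  exact Walk.length_takeUntil_lt_length hu (G.ne_of_adj huv.2.2.1)

theorem isAcyclic_deleteEdges_recessive :
    ((inducedSub G S).deleteEdges
      {e | ∃ u v, e = s(u, v) ∧ Recessive μ S α u v}).IsAcyclic := by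
  classical
  refine isAcyclic_of_orientation (Dominant μ S α)
    (fun v => if h : Isolated μ α v then h.choose.length else 0) ?_
    (fun _ _ _ h1 h2 => h1.left_unique hspec h2) fun a b c hab hbc => ?_
  · intro a b hab
    obtain ⟨⟨ha, hb, hG⟩, hnot⟩ := deleteEdges_adj.mp hab
    by_contra! h
    exact hnot ⟨a, b, rfl, ha, hb, hG, h.1, h.2⟩
  · simp only [dif_pos hab.2.2.2.1, dif_pos hbc.2.2.2.1]
    exact hbc.length_lt hspec hab.2.2.2.1.choose_spec hbc.2.2.2.1.choose_spec

end CF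

theorem stmt4_general {V : Type} [Fintype V] [DecidableEq V]
    (G : SimpleGraph V) (d : ℕ)
    (ε : ℝ)
    (S : Finset V) (s : V) (ℓ : ℕ)
    (μ : MeasureTheory.Measure (CF.WalkSpace G s ℓ)) [MeasureTheory.IsProbabilityMeasure μ]
    (α : ℝ) (hspec : CF.Special μ S α)
    (hfar : ∀ F : Finset (Sym2 V), ↑F ⊆ (CF.inducedSub G ↑S).edgeSet →
      ((CF.inducedSub G ↑S).deleteEdges ↑F).IsAcyclic →
      ε * S.card * d < (F.card : ℝ)) :
    ε * S.card * d <
      (({e : Sym2 V | ∃ u v, e = s(u, v) ∧ CF.Recessive μ S α u v}.ncard : ℝ)) := by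
  set R := {e : Sym2 V | ∃ u v, e = s(u, v) ∧ CF.Recessive μ S α u v}
  have hR : R ⊆ (CF.inducedSub G ↑S).edgeSet := by
    rintro e ⟨u, v, rfl, hu, hv, huv, -⟩
    exact ⟨hu, hv, huv⟩
  have hbound := hfar R.toFinite.toFinset (by rwa [Set.Finite.coe_toFinset])
    (by rw [Set.Finite.coe_toFinset]; exact CF.isAcyclic_deleteEdges_recessive hspec)
  rwa [Set.ncard_eq_toFinset_card R]

/-- If `G_S` is `ε`-far from cycle-free, then `G_S` has more than `ε·|S|·d`
recessive edges. -/
theorem stmt4 {V : Type} [Fintype V] [DecidableEq V]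
    (G : SimpleGraph V) [DecidableRel G.Adj] (d : ℕ) (hd : 1 ≤ d)
    (hdeg : ∀ v, G.degree v ≤ d)
    (ε : ℝ) (hε0 : 0 < ε) (hε1 : ε < 1)
    (S : Finset V) (s : V) (hs : s ∈ S) (ℓ : ℕ)
    (μ : MeasureTheory.Measure (CF.WalkSpace G s ℓ)) [MeasureTheory.IsProbabilityMeasure μ]
    (α : ℝ) (hα : 0 < α) (hspec : CF.Special μ S α)
    (hfar : ∀ F : Finset (Sym2 V), ↑F ⊆ (CF.inducedSub G ↑S).edgeSet →
      ((CF.inducedSub G ↑S).deleteEdges ↑F).IsAcyclic →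
      ε * S.card * d < (F.card : ℝ)) :
    ε * S.card * d <
      (({e : Sym2 V | ∃ u v, e = s(u, v) ∧ CF.Recessive μ S α u v}.ncard : ℝ)) :=
  stmt4_general G d ε S s ℓ μ α hspec hfar
end

section
/- Suppose that for every subset H of the vertex set of G with |H| > ε·n/4 there exists a nonempty subset T ⊆ H such that: (a) the number of edges of G between T and H∖T is at most ε·|T|·d/2; and (b) the induced subgraph G_T can be made a forest by removing at most ε·|T|·d/4 of its edges. Then G can be made a forest by removing at most ε·n·d edges; that is, G is ε-close to cycle-free. -/
open SimpleGraph

/-!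
Peel the vertex set: while the remaining set `H` has more than `εn/4` vertices, take the set
`T ⊆ H` given by the hypothesis, delete the at most `ε|T|d/4` edges that make `G_T` a forest
together with the at most `ε|T|d/2` edges from `T` to `H ∖ T`, and continue with `H ∖ T`.
Once all edges between the pieces are gone, the union of the forests on the pieces is a forest.
Each peeled vertex costs at most `3εd/4` deletions, and the final remainder, having at most
`εn/4` vertices, has at most `εnd/8` edges, which are all deleted: `3εnd/4 + εnd/8 ≤ εnd`.
-/

namespace SimpleGraph

variable {V : Type} {G A B : SimpleGraph V} {S : Set V}

lemma Walk.edges_subset_edgeSet_of_le_sup (hG : G ≤ A ⊔ B) (hA : ∀ u v, A.Adj u v → u ∈ S)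
    (hB : ∀ u v, B.Adj u v → u ∉ S) {a b : V} (w : G.Walk a b) (ha : a ∈ S) :
    ∀ e ∈ w.edges, e ∈ A.edgeSet := by
  induction w with
  | nil => simp
  | cons hadj w ih =>
    have hA' := (hG hadj).resolve_right fun h => hB _ _ h ha
    simp only [Walk.edges_cons, List.mem_cons]
    rintro e (rfl | he)
    · exact hA'
    · exact ih (hA _ _ hA'.symm) e he

lemma IsAcyclic.of_le_sup_of_separated (hAc : A.IsAcyclic) (hBc : B.IsAcyclic)
    (hG : G ≤ A ⊔ B) (hA : ∀ u v, A.Adj u v → u ∈ S) (hB : ∀ u v, B.Adj u v → u ∉ S) :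
    G.IsAcyclic := by
  intro v c hc
  by_cases hv : v ∈ S
  · exact hAc _ (hc.transfer (c.edges_subset_edgeSet_of_le_sup hG hA hB hv))
  · exact hBc _ (hc.transfer (c.edges_subset_edgeSet_of_le_sup (S := Sᶜ)
      (hG.trans (sup_comm A B).le) hB (fun u v h hu => hu (hA u v h)) hv))

end SimpleGraph

namespace CF

section

variable {V : Type}

def DeletableToForest (G : SimpleGraph V) (k : ℝ) : Prop :=
  ∃ F : Finset (Sym2 V), ↑F ⊆ G.edgeSet ∧ (F.card : ℝ) ≤ k ∧ (G.deleteEdges ↑F).IsAcyclic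

lemma DeletableToForest.mono {G : SimpleGraph V} {k k' : ℝ} (h : DeletableToForest G k)
    (hk : k ≤ k') : DeletableToForest G k' :=
  let ⟨F, hF, hcard, hacyc⟩ := h
  ⟨F, hF, hcard.trans hk, hacyc⟩

def crossEdges (G : SimpleGraph V) (T H : Finset V) : Set (Sym2 V) :=
  {e | ∃ u v, e = s(u, v) ∧ G.Adj u v ∧ u ∈ T ∧ v ∈ H ∧ v ∉ T}

end

variable {V : Type} {G : SimpleGraph V}

lemma inducedSub_le (S : Set V) : inducedSub G S ≤ G := fun _ _ h => h.2.2

lemma inducedSub_mono {S S' : Set V} (h : S ⊆ S') : inducedSub G S ≤ inducedSub G S' :=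
  fun _ _ hadj => ⟨h hadj.1, h hadj.2.1, hadj.2.2⟩

lemma inducedSub_univ : inducedSub G Set.univ = G := by
  ext u v
  simp [inducedSub]

lemma two_mul_card_edgeFinset_inducedSub_le [Fintype V] [DecidableRel G.Adj] {d : ℕ}
    (hdeg : ∀ v, G.degree v ≤ d) (H : Finset V)
    [DecidableRel (inducedSub G H).Adj] : 2 * (inducedSub G H).edgeFinset.card ≤ H.card * d := by
  have hout : ∀ v ∉ H, (inducedSub G H).degree v = 0 := fun v hv =>
    Finset.card_eq_zero.mpr <| Finset.eq_empty_of_forall_notMem fun u hu =>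
      hv ((mem_neighborFinset _ _ _).mp hu).1
  calc 2 * (inducedSub G H).edgeFinset.card = ∑ v, (inducedSub G H).degree v :=
        (sum_degrees_eq_twice_card_edges _).symm
    _ = ∑ v ∈ H, (inducedSub G H).degree v :=
        (Finset.sum_subset (Finset.subset_univ H) fun v _ hv => hout v hv).symm
    _ ≤ H.card • d := Finset.sum_le_card_nsmul _ _ _ fun v _ =>
        (degree_le_of_le (inducedSub_le _)).trans (hdeg v)
    _ = H.card * d := smul_eq_mul _ _

lemma deletableToForest_inducedSub_of_degree_le [Fintype V] [DecidableRel G.Adj] {d : ℕ}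
    (hdeg : ∀ v, G.degree v ≤ d) (H : Finset V) :
    DeletableToForest (inducedSub G H) (H.card * d / 2) := by
  classical
  refine ⟨(inducedSub G H).edgeFinset, (coe_edgeFinset _).subset, ?_, by simp [isAcyclic_bot]⟩
  have := two_mul_card_edgeFinset_inducedSub_le hdeg H
  rw [le_div_iff₀ two_pos, mul_comm]
  exact_mod_cast this

lemma crossEdges_finite (G : SimpleGraph V) (T H : Finset V) : (crossEdges G T H).Finite := by
  refine ((T ×ˢ H).finite_toSet.image fun p : V × V => s(p.1, p.2)).subset ?_
  rintro _ ⟨u, v, rfl, -, hu, hv, -⟩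
  exact ⟨(u, v), by simp [hu, hv], rfl⟩

lemma inducedSub_deleteEdges_le_sup [DecidableEq V] (T H : Finset V) (F_T F_R : Set (Sym2 V)) :
    (inducedSub G H).deleteEdges (F_R ∪ crossEdges G T H ∪ F_T) ≤
      (inducedSub G T).deleteEdges F_T ⊔ (inducedSub G ↑(H \ T)).deleteEdges F_R := by
  intro u v h
  simp only [deleteEdges_adj, Set.mem_union, not_or] at h
  obtain ⟨⟨huH, hvH, huv⟩, ⟨hF_R, hcross⟩, hF_T⟩ := h
  by_cases hu : u ∈ T <;> by_cases hv : v ∈ T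
  · exact Or.inl (deleteEdges_adj.mpr ⟨⟨hu, hv, huv⟩, hF_T⟩)
  · exact absurd ⟨u, v, rfl, huv, hu, hvH, hv⟩ hcross
  · exact absurd ⟨v, u, Sym2.eq_swap, huv.symm, hv, huH, hu⟩ hcross
  · exact Or.inr (deleteEdges_adj.mpr ⟨⟨by simp [huH, hu], by simp [hvH, hv], huv⟩, hF_R⟩)

lemma DeletableToForest.inducedSub_of_subset [DecidableEq V] {T H : Finset V} {a b c : ℝ}
    (hTH : T ⊆ H) (hT : DeletableToForest (inducedSub G T) a)
    (hR : DeletableToForest (inducedSub G ↑(H \ T)) b)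
    (hcross : ((crossEdges G T H).ncard : ℝ) ≤ c) :
    DeletableToForest (inducedSub G H) (a + b + c) := by
  obtain ⟨F_T, hF_T, hcard_T, hacyc_T⟩ := hT
  obtain ⟨F_R, hF_R, hcard_R, hacyc_R⟩ := hR
  refine ⟨F_R ∪ (crossEdges_finite G T H).toFinset ∪ F_T, ?_, ?_, ?_⟩
  · simp only [Finset.coe_union, Set.Finite.coe_toFinset, Set.union_subset_iff]
    refine ⟨⟨hF_R.trans (edgeSet_mono (inducedSub_mono (by simp))), ?_⟩,
      hF_T.trans (edgeSet_mono (inducedSub_mono (by simpa using hTH)))⟩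
    rintro _ ⟨u, v, rfl, huv, hu, hv, -⟩
    exact ⟨hTH hu, hv, huv⟩
  · rw [Set.ncard_eq_toFinset_card _ (crossEdges_finite G T H)] at hcross
    have hunion : (F_R ∪ (crossEdges_finite G T H).toFinset ∪ F_T).card ≤
        F_R.card + (crossEdges_finite G T H).toFinset.card + F_T.card :=
      (Finset.card_union_le _ _).trans (Nat.add_le_add_right (Finset.card_union_le _ _) _)
    have := (Nat.cast_le (α := ℝ)).mpr hunion
    push_cast at this
    linarith
  · refine IsAcyclic.of_le_sup_of_separated hacyc_T hacyc_R ?_ (S := ↑T)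
      (fun _ _ h => h.1.1) (fun _ _ h => (Finset.mem_sdiff.mp h.1.1).2)
    rw [Finset.coe_union, Finset.coe_union, Set.Finite.coe_toFinset]
    exact inducedSub_deleteEdges_le_sup T H _ _

lemma deletableToForest_inducedSub [Fintype V] [DecidableRel G.Adj] {d : ℕ}
    (hdeg : ∀ v, G.degree v ≤ d) {m α β : ℝ} (hαβ : 0 ≤ α + β)
    (hpeel : ∀ H : Finset V, m < H.card → ∃ T ⊆ H, T.Nonempty ∧
      ((crossEdges G T H).ncard : ℝ) ≤ α * T.card ∧
        DeletableToForest (inducedSub G T) (β * T.card))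
    (H : Finset V) : DeletableToForest (inducedSub G H) ((α + β) * H.card + m * d / 2) := by
  classical
  induction H using Finset.strongInduction with
  | H H ih =>
    by_cases hH : m < H.card
    · obtain ⟨T, hTH, hT, hcross, hforest⟩ := hpeel H hH
      have hrest := ih (H \ T) (Finset.sdiff_ssubset hTH hT)
      refine (hforest.inducedSub_of_subset hTH hrest hcross).mono ?_
      rw [Finset.card_sdiff_of_subset hTH, Nat.cast_sub (Finset.card_le_card hTH)]
      linarith
    · refine (deletableToForest_inducedSub_of_degree_le hdeg H).mono ?_
      have hd : (0 : ℝ) ≤ d := d.cast_nonneg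
      nlinarith [mul_le_mul_of_nonneg_right (not_lt.mp hH) hd,
        mul_nonneg hαβ (H.card.cast_nonneg : (0 : ℝ) ≤ H.card)]

end CF

theorem stmt16_general {V : Type} [Fintype V]
    (G : SimpleGraph V) [DecidableRel G.Adj] (d : ℕ)
    (hdeg : ∀ v, G.degree v ≤ d)
    (ε : ℝ) (hε0 : 0 < ε)
    (hyp : ∀ H : Finset V, ε * Fintype.card V / 4 < (H.card : ℝ) →
      ∃ T : Finset V, T ⊆ H ∧ T.Nonempty ∧
        ({e : Sym2 V | ∃ u v, e = s(u, v) ∧ G.Adj u v ∧ u ∈ T ∧ v ∈ H ∧ v ∉ T}.ncard : ℝ)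
            ≤ ε * T.card * d / 2 ∧
        ∃ F : Finset (Sym2 V), ↑F ⊆ (CF.inducedSub G ↑T).edgeSet ∧
          (F.card : ℝ) ≤ ε * T.card * d / 4 ∧
          ((CF.inducedSub G ↑T).deleteEdges ↑F).IsAcyclic) :
    ∃ F : Finset (Sym2 V), ↑F ⊆ G.edgeSet ∧ (F.card : ℝ) ≤ ε * Fintype.card V * d ∧
      (G.deleteEdges ↑F).IsAcyclic := by
  have hpeel : ∀ H : Finset V, ε * Fintype.card V / 4 < H.card → ∃ T ⊆ H, T.Nonempty ∧
      ((CF.crossEdges G T H).ncard : ℝ) ≤ ε * d / 2 * T.card ∧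
      CF.DeletableToForest (CF.inducedSub G T) (ε * d / 4 * T.card) := by
    intro H hH
    obtain ⟨T, hTH, hT, hcross, hforest⟩ := hyp H hH
    exact ⟨T, hTH, hT, hcross.trans_eq (by ring), CF.DeletableToForest.mono hforest (le_of_eq (by ring))⟩
  have hG := CF.deletableToForest_inducedSub hdeg (by positivity) hpeel Finset.univ
  rw [Finset.coe_univ, CF.inducedSub_univ, Finset.card_univ] at hG
  refine hG.mono ?_
  have : 0 ≤ ε * Fintype.card V * d := by positivity
  linarith

/-- If every vertex subset `H` with `|H| > εn/4` contains a nonempty `T ⊆ H`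
with at most `ε·|T|·d/2` edges between `T` and `H∖T` whose induced subgraph can be made a
forest by deleting at most `ε·|T|·d/4` edges, then `G` can be made a forest by removing at
most `ε·n·d` edges. -/
theorem stmt16 {V : Type} [Fintype V] [DecidableEq V]
    (G : SimpleGraph V) [DecidableRel G.Adj] (d : ℕ) (hd : 1 ≤ d)
    (hdeg : ∀ v, G.degree v ≤ d)
    (ε : ℝ) (hε0 : 0 < ε) (hε1 : ε < 1)
    (hyp : ∀ H : Finset V, ε * Fintype.card V / 4 < (H.card : ℝ) →
      ∃ T : Finset V, T ⊆ H ∧ T.Nonempty ∧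
        ({e : Sym2 V | ∃ u v, e = s(u, v) ∧ G.Adj u v ∧ u ∈ T ∧ v ∈ H ∧ v ∉ T}.ncard : ℝ)
            ≤ ε * T.card * d / 2 ∧
        ∃ F : Finset (Sym2 V), ↑F ⊆ (CF.inducedSub G ↑T).edgeSet ∧
          (F.card : ℝ) ≤ ε * T.card * d / 4 ∧
          ((CF.inducedSub G ↑T).deleteEdges ↑F).IsAcyclic) :
    ∃ F : Finset (Sym2 V), ↑F ⊆ G.edgeSet ∧ (F.card : ℝ) ≤ ε * Fintype.card V * d ∧
      (G.deleteEdges ↑F).IsAcyclic :=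
  stmt16_general G d hdeg ε hε0 hyp
end
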